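/- For a 1-form ω on a Lorentzian vector space, the superenergy tensor T{ω}(x,y) = ω(x)ω(y) - (1/2) g⁻¹(ω,ω) g(x,y) satisfies: T{ω} = 0 if and only if ω = 0. -/

import Mathlib

open scoped BigOperators

noncomputable section

/-- Minkowski metric on `Fin n → ℝ`, mostly-plus signature (1, n-1). -/
def mink (n : ℕ) [NeZero n] (u v : Fin n → ℝ) : ℝ :=
  ∑ i : Fin n, (if i = 0 then (-1 : ℝ) else 1) * u i * v i

/-- Future-pointing causal vector: nonpositive norm, in the closed future half-cone. -/
def FutureCausal (n : ℕ) [NeZero n] (u : Fin n → ℝ) : Prop :=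
  mink n u u ≤ 0 ∧ 0 ≤ u 0

/-- Inverse Minkowski metric acting on covectors (components in the standard basis). -/
def minkInv (n : ℕ) [NeZero n] (k l : (Fin n → ℝ) →ₗ[ℝ] ℝ) : ℝ :=
  ∑ i : Fin n, (if i = 0 then (-1 : ℝ) else 1) * k (Pi.single i 1) * l (Pi.single i 1)

/-- Superenergy tensor of a 1-form:
`T{ω}(x,y) = ω(x)ω(y) - (1/2) g⁻¹(ω,ω) g(x,y)`. -/
def seT1 (n : ℕ) [NeZero n] (ω : (Fin n → ℝ) →ₗ[ℝ] ℝ) (x y : Fin n → ℝ) : ℝ :=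
  ω x * ω y - (1 / 2) * minkInv n ω ω * mink n x y

lemma mink_single_zero_self (n : ℕ) [NeZero n] :
    mink n (Pi.single 0 1) (Pi.single 0 1) = -1 := by
  rw [mink, Finset.sum_eq_single 0]
  · simp
  · intro j _ hj
    simp [hj]
  · simp

lemma neg_mul_self_le_minkInv_self (n : ℕ) [NeZero n] (ω : (Fin n → ℝ) →ₗ[ℝ] ℝ) :
    -(ω (Pi.single 0 1) * ω (Pi.single 0 1)) ≤ minkInv n ω ω := by
  rw [minkInv, ← Finset.add_sum_erase _ _ (Finset.mem_univ 0)]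
  have hspace : 0 ≤ ∑ i ∈ Finset.univ.erase 0,
      (if i = 0 then (-1 : ℝ) else 1) * ω (Pi.single i 1) * ω (Pi.single i 1) := by
    refine Finset.sum_nonneg fun i hi => ?_
    rw [if_neg (Finset.ne_of_mem_erase hi), one_mul]
    exact mul_self_nonneg _
  rw [if_pos rfl]
  linarith

/-- The spacelike part of `g⁻¹(ω,ω)` is nonnegative, so `T{ω}(e₀,e₀) = ω₀² + g⁻¹(ω,ω)/2 = 0`
forces `g⁻¹(ω,ω) ≥ g⁻¹(ω,ω)/2` and `g⁻¹(ω,ω) ≤ 0` at once. -/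
lemma minkInv_self_eq_zero_of_seT1_single_zero (n : ℕ) [NeZero n] (ω : (Fin n → ℝ) →ₗ[ℝ] ℝ)
    (h : seT1 n ω (Pi.single 0 1) (Pi.single 0 1) = 0) : minkInv n ω ω = 0 := by
  rw [seT1, mink_single_zero_self] at h
  have hbound := neg_mul_self_le_minkInv_self n ω
  linarith [mul_self_nonneg (ω (Pi.single 0 1))]

lemma seT1_self_of_minkInv_self_eq_zero (n : ℕ) [NeZero n] {ω : (Fin n → ℝ) →ₗ[ℝ] ℝ}
    (hω : minkInv n ω ω = 0) (x : Fin n → ℝ) : seT1 n ω x x = ω x * ω x := by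
  simp [seT1, hω]

theorem stmt_7_general (n : ℕ) [NeZero n]
    (ω : (Fin n → ℝ) →ₗ[ℝ] ℝ) :
    (∀ x y : Fin n → ℝ, seT1 n ω x y = 0) ↔ ω = 0 := by
  constructor
  · intro h
    have hnull := minkInv_self_eq_zero_of_seT1_single_zero n ω (h _ _)
    refine LinearMap.ext fun x => ?_
    simpa [seT1_self_of_minkInv_self_eq_zero n hnull] using h x x
  · rintro rfl x y
    simp [seT1, minkInv]

/-- The superenergy tensor of a 1-form vanishes iff the 1-form vanishes. -/
theorem stmt_7 (n : ℕ) [NeZero n] (hn : 2 ≤ n)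
    (ω : (Fin n → ℝ) →ₗ[ℝ] ℝ) :
    (∀ x y : Fin n → ℝ, seT1 n ω x y = 0) ↔ ω = 0 :=
  stmt_7_general n ω
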